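/- arXiv:2301.06587 — 6 statements merged into one kernel-verified Lean document; each statement's English description precedes it below -/
import Mathlib

section
/- Let μ, ν > −1/2. Then for all x, y > 0, ∫_{x+y}^{+∞} |R_{μ,ν}(x,y,z)| (xy)^{−μ} z^{μ+1} dz = (|sin((ν−μ)π)| / (π³/2)^{1/2}) ∫₁^{+∞} (t²−1)^{μ/2−1/4} |Q^{1/2−μ}_{ν−1/2}(t)| dt, as an equality of (possibly infinite) Lebesgue integrals; in particular the left-hand side does not depend on x and y. -/
open MeasureTheory Real Set Filter Topology

/-- Gauss hypergeometric function ₂F₁(a,b;c;s) as a power series. -/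
noncomputable def hyp2F1 (a b c s : ℝ) : ℝ :=
  ∑' n : ℕ, ((∏ i ∈ Finset.range n, (a + i)) * (∏ i ∈ Finset.range n, (b + i)) /
    ((∏ i ∈ Finset.range n, (c + i)) * n.factorial)) * s ^ n

/-- Associated Legendre function of the first kind, for -1 < t < 1. -/
noncomputable def legendreP (μ ν t : ℝ) : ℝ :=
  (1 / Real.Gamma (1 - μ)) * ((1 + t) / (1 - t)) ^ (μ / 2) *
    hyp2F1 (ν + 1) (-ν) (1 - μ) ((1 - t) / 2)

/-- The real factor of the associated Legendre function of the second kind (t > 1),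
i.e. `Q^μ_ν(t)` without its phase `e^{iπμ}`. -/
noncomputable def legendreQreal (μ ν t : ℝ) : ℝ :=
  Real.sqrt Real.pi * Real.Gamma (μ + ν + 1) * (t ^ 2 - 1) ^ (μ / 2) /
    ((2 : ℝ) ^ (ν + 1) * t ^ (μ + ν + 1) * Real.Gamma (ν + 3 / 2)) *
    hyp2F1 ((μ + ν) / 2 + 1) ((μ + ν + 1) / 2) (ν + 3 / 2) (1 / t ^ 2)

/-- Associated Legendre function of the second kind, for t > 1. -/
noncomputable def legendreQ (μ ν t : ℝ) : ℂ :=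
  Complex.exp ((Real.pi * μ : ℝ) * Complex.I) * (legendreQreal μ ν t : ℝ)

/-- Macdonald's integral `R_{μ,ν}(x,y,z)` of three Bessel functions, for x, y, z > 0. -/
noncomputable def Rmn (μ ν x y z : ℝ) : ℝ :=
  if z < |x - y| then 0
  else if z < x + y then
    (x * y) ^ (μ - 1) *
      Real.sqrt (1 - ((x ^ 2 + y ^ 2 - z ^ 2) / (2 * x * y)) ^ 2) ^ (μ - 1 / 2) *
      legendreP (1 / 2 - μ) (ν - 1 / 2) ((x ^ 2 + y ^ 2 - z ^ 2) / (2 * x * y)) /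
      (Real.sqrt (2 * Real.pi) * z ^ μ)
  else
    Real.sin ((ν - μ) * Real.pi) * (x * y) ^ (μ - 1) *
      Real.sqrt (((z ^ 2 - x ^ 2 - y ^ 2) / (2 * x * y)) ^ 2 - 1) ^ (μ - 1 / 2) *
      legendreQreal (1 / 2 - μ) (ν - 1 / 2) ((z ^ 2 - x ^ 2 - y ^ 2) / (2 * x * y)) /
      (Real.sqrt (Real.pi ^ 3 / 2) * z ^ μ)

/-- Normalized Bessel function 𝒥_ν. -/
noncomputable def normBessel (ν w : ℝ) : ℝ :=
  Real.Gamma (ν + 1) *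
    ∑' n : ℕ, (-1 : ℝ) ^ n * (w / 2) ^ (2 * n) / (n.factorial * Real.Gamma (ν + n + 1))

/-- Bessel function of the first kind J_ν. -/
noncomputable def besselJ (ν w : ℝ) : ℝ :=
  (w / 2) ^ ν *
    ∑' n : ℕ, (-1 : ℝ) ^ n * (w / 2) ^ (2 * n) / (n.factorial * Real.Gamma (ν + n + 1))

/-- The constant m_{k,a}. -/
noncomputable def mka (k a : ℝ) : ℂ :=
  Complex.exp ((-(Real.pi / a) : ℝ) * Complex.I) *
    ((Real.Gamma ((2 * k + a - 1) / a) /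
      (a ^ ((2 : ℝ) / a) * Real.Gamma ((2 * k + a + 1) / a)) : ℝ) : ℂ)

/-- The one-dimensional (k,a)-generalized Fourier kernel B_{k,a}(λ,x). -/
noncomputable def Bka (k a lam x : ℝ) : ℂ :=
  ((normBessel ((2 * k - 1) / a) ((2 / a) * |lam * x| ^ (a / 2)) : ℝ) : ℂ) +
    mka k a * ((lam * x : ℝ) : ℂ) *
      ((normBessel ((2 * k + 1) / a) ((2 / a) * |lam * x| ^ (a / 2)) : ℝ) : ℂ)

/-- The kernel Δ_{k,a}(x,y,z) of the product formula. -/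
noncomputable def DeltaKA (k a x y z : ℝ) : ℂ :=
  ((a * (2 : ℝ) ^ ((2 * k - 1) / a - 2) * Real.Gamma ((2 * k - 1) / a + 1) *
      |x * y * z| ^ ((1 : ℝ) / 2 - k) : ℝ) : ℂ) *
  (((Rmn ((2 * k - 1) / a) ((2 * k - 1) / a) (|x| ^ (a / 2)) (|y| ^ (a / 2)) (|z| ^ (a / 2)) : ℝ) : ℂ) +
    Complex.exp ((-(2 * Real.pi / a) : ℝ) * Complex.I) * ((Real.sign (x * y) : ℝ) : ℂ) *
      ((Rmn ((2 * k - 1) / a) ((2 * k + 1) / a) (|x| ^ (a / 2)) (|y| ^ (a / 2)) (|z| ^ (a / 2)) : ℝ) : ℂ) +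
    ((Real.sign (x * z) : ℝ) : ℂ) *
      ((Rmn ((2 * k - 1) / a) ((2 * k + 1) / a) (|x| ^ (a / 2)) (|z| ^ (a / 2)) (|y| ^ (a / 2)) : ℝ) : ℂ) +
    ((Real.sign (y * z) : ℝ) : ℂ) *
      ((Rmn ((2 * k - 1) / a) ((2 * k + 1) / a) (|y| ^ (a / 2)) (|z| ^ (a / 2)) (|x| ^ (a / 2)) : ℝ) : ℂ))

/-- The weighted measure |x|^{2k+a-2} dx on ℝ. -/
noncomputable def wMeasure (k a : ℝ) : Measure ℝ :=
  volume.withDensity fun x => ENNReal.ofReal (|x| ^ (2 * k + a - 2))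

/-- Gegenbauer polynomial C_n^μ. -/
noncomputable def gegenbauer (μ : ℝ) (n : ℕ) (x : ℝ) : ℝ :=
  ∑ j ∈ Finset.range (n / 2 + 1),
    (-1 : ℝ) ^ j * Real.Gamma ((n : ℝ) - j + μ) /
      (Real.Gamma μ * j.factorial * (n - 2 * j).factorial) * (2 * x) ^ (n - 2 * j)

/-! For `z > x + y` the kernel `R_{μ,ν}` is given by its Legendre-`Q` branch, evaluated at
`t = cosh θ = (z² - x² - y²) / (2xy)`. Since `dt = z dz / (xy)`, the weight `(xy)^{-μ} z^{μ+1}`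
turns `|R_{μ,ν}| dz` into a constant multiple of `(t² - 1)^{μ/2 - 1/4} |Q(t)| dt`, and `z = x + y`
corresponds to `t = 1`. -/

theorem norm_legendreQ (μ ν t : ℝ) : ‖legendreQ μ ν t‖ = |legendreQreal μ ν t| := by
  simp [legendreQ, Complex.norm_exp]

theorem image_sq_sub_div_Ioi {s c d : ℝ} (hs : 0 ≤ s) (hd : 0 < d) :
    (fun z => (z ^ 2 - c) / d) '' Ioi s = Ioi ((s ^ 2 - c) / d) := by
  ext t
  simp only [mem_image, mem_Ioi]
  constructor
  · rintro ⟨z, hz, rfl⟩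
    gcongr
  · intro ht
    have hlt : s ^ 2 < d * t + c := by rw [div_lt_iff₀ hd] at ht; linarith
    refine ⟨√(d * t + c), ?_, ?_⟩
    · exact (Real.lt_sqrt hs).mpr hlt
    · rw [Real.sq_sqrt ((sq_nonneg s).trans hlt.le)]
      field_simp
      ring

theorem lintegral_Ioi_comp_sq_sub_div {s c d : ℝ} (hs : 0 ≤ s) (hd : 0 < d)
    (g : ℝ → ENNReal) :
    ∫⁻ z in Ioi s, ENNReal.ofReal (2 * z / d) * g ((z ^ 2 - c) / d) =
      ∫⁻ t in Ioi ((s ^ 2 - c) / d), g t := by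
  have hderiv : ∀ z ∈ Ioi s,
      HasDerivWithinAt (fun z => (z ^ 2 - c) / d) (2 * z / d) (Ioi s) z := fun z _ => by
    simpa using (((hasDerivAt_pow 2 z).sub_const c).div_const d).hasDerivWithinAt
  have hmono : MonotoneOn (fun z => (z ^ 2 - c) / d) (Ioi s) := fun a ha b _ hab => by
    have : 0 ≤ a := hs.trans (le_of_lt ha)
    dsimp only
    gcongr
  rw [← image_sq_sub_div_Ioi hs hd,
    lintegral_image_eq_lintegral_deriv_mul_of_monotoneOn measurableSet_Ioi hderiv hmono]

theorem Rmn_of_add_le {μ ν x y z : ℝ} (hx : 0 < x) (hy : 0 < y) (hz : x + y ≤ z) :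
    Rmn μ ν x y z =
      sin ((ν - μ) * π) * (x * y) ^ (μ - 1) *
        (((z ^ 2 - x ^ 2 - y ^ 2) / (2 * x * y)) ^ 2 - 1) ^ (μ / 2 - 1 / 4) *
        legendreQreal (1 / 2 - μ) (ν - 1 / 2) ((z ^ 2 - x ^ 2 - y ^ 2) / (2 * x * y)) /
        (√(π ^ 3 / 2) * z ^ μ) := by
  have hxy : |x - y| ≤ z := (abs_sub_lt_iff.mpr ⟨by linarith, by linarith⟩).le.trans hz
  have ht : 1 ≤ (z ^ 2 - x ^ 2 - y ^ 2) / (2 * x * y) := by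
    rw [le_div_iff₀ (by positivity)]
    nlinarith
  rw [Rmn, if_neg hxy.not_gt, if_neg hz.not_gt, Real.sqrt_eq_rpow,
    ← Real.rpow_mul (by nlinarith)]
  ring_nf

theorem abs_Rmn_mul_eq {μ ν x y z : ℝ} (hx : 0 < x) (hy : 0 < y) (hz : x + y < z) :
    |Rmn μ ν x y z| * (x * y) ^ (-μ) * z ^ (μ + 1) =
      |sin ((ν - μ) * π)| / √(π ^ 3 / 2) * (2 * z / (2 * x * y) *
        ((((z ^ 2 - x ^ 2 - y ^ 2) / (2 * x * y)) ^ 2 - 1) ^ (μ / 2 - 1 / 4) *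
          |legendreQreal (1 / 2 - μ) (ν - 1 / 2) ((z ^ 2 - x ^ 2 - y ^ 2) / (2 * x * y))|)) := by
  have hxy : 0 < x * y := mul_pos hx hy
  have hz0 : 0 < z := by linarith
  have hs : 0 < √(π ^ 3 / 2) := by positivity
  have ht : 0 ≤ ((z ^ 2 - x ^ 2 - y ^ 2) / (2 * x * y)) ^ 2 - 1 := by
    rw [sub_nonneg, one_le_sq_iff_one_le_abs, le_abs, le_div_iff₀ (by positivity)]
    exact Or.inl (by nlinarith)
  rw [Rmn_of_add_le hx hy hz.le, abs_div, abs_mul, abs_mul, abs_mul, abs_mul,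
    abs_of_pos (Real.rpow_pos_of_pos hxy _), abs_of_nonneg (Real.rpow_nonneg ht _), abs_of_pos hs,
    abs_of_pos (Real.rpow_pos_of_pos hz0 _), Real.rpow_sub hxy, Real.rpow_one,
    Real.rpow_neg hxy.le, Real.rpow_add hz0, Real.rpow_one]
  have : (x * y) ^ μ ≠ 0 := (Real.rpow_pos_of_pos hxy _).ne'
  have : z ^ μ ≠ 0 := (Real.rpow_pos_of_pos hz0 _).ne'
  field_simp

theorem statement10_general (μ ν : ℝ)
    (x y : ℝ) (hx : 0 < x) (hy : 0 < y) :
    ∫⁻ z in Set.Ioi (x + y),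
        ENNReal.ofReal (|Rmn μ ν x y z| * (x * y) ^ (-μ) * z ^ (μ + 1)) =
      ENNReal.ofReal (|Real.sin ((ν - μ) * Real.pi)| / Real.sqrt (Real.pi ^ 3 / 2)) *
        ∫⁻ t in Set.Ioi (1 : ℝ),
          ENNReal.ofReal ((t ^ 2 - 1) ^ (μ / 2 - 1 / 4) *
            ‖legendreQ (1 / 2 - μ) (ν - 1 / 2) t‖) := by
  have hbase : ((x + y) ^ 2 - (x ^ 2 + y ^ 2)) / (2 * x * y) = 1 := by
    field_simp
    ring
  have hsubst := lintegral_Ioi_comp_sq_sub_div (s := x + y) (c := x ^ 2 + y ^ 2) (by positivity)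
    (by positivity : 0 < 2 * x * y)
    fun t => ENNReal.ofReal ((t ^ 2 - 1) ^ (μ / 2 - 1 / 4) * ‖legendreQ (1 / 2 - μ) (ν - 1 / 2) t‖)
  rw [hbase] at hsubst
  rw [← hsubst, ← lintegral_const_mul' _ _ ENNReal.ofReal_ne_top]
  refine setLIntegral_congr_fun measurableSet_Ioi fun z hz => ?_
  have hz0 : 0 < z := (add_pos hx hy).trans hz
  rw [← sub_sub, norm_legendreQ, abs_Rmn_mul_eq hx hy hz, ← ENNReal.ofReal_mul (by positivity),
    ← ENNReal.ofReal_mul (by positivity)]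

/-- The hyperbolic-range integral of |R_{μ,ν}| reduces to an integral of the Legendre Q function. -/
theorem statement10 (μ ν : ℝ) (hμ : -(1 / 2) < μ) (hν : -(1 / 2) < ν)
    (x y : ℝ) (hx : 0 < x) (hy : 0 < y) :
    ∫⁻ z in Set.Ioi (x + y),
        ENNReal.ofReal (|Rmn μ ν x y z| * (x * y) ^ (-μ) * z ^ (μ + 1)) =
      ENNReal.ofReal (|Real.sin ((ν - μ) * Real.pi)| / Real.sqrt (Real.pi ^ 3 / 2)) *
        ∫⁻ t in Set.Ioi (1 : ℝ),
          ENNReal.ofReal ((t ^ 2 - 1) ^ (μ / 2 - 1 / 4) *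
            ‖legendreQ (1 / 2 - μ) (ν - 1 / 2) t‖) :=
  statement10_general μ ν x y hx hy
end

section
/- Let μ, ν > −1/2. Then for all x, y > 0, ∫_{|x−y|}^{x+y} |R_{μ,ν}(x,y,z)| (xy)^{−μ} z^{μ+1} dz = (1/√(2π)) ∫_{−1}^{1} (1−t²)^{μ/2−1/4} |P^{1/2−μ}_{ν−1/2}(t)| dt, as an equality of (possibly infinite) Lebesgue integrals; in particular the left-hand side does not depend on x and y. -/
/-
Substitute `z = √(x² + y² - 2xyt)`, the third side of a triangle with sides `x, y` enclosing an
angle of cosine `t`. This maps `(-1, 1)` bijectively onto `(|x - y|, x + y)` with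
`|dz/dt| = xy / z`, and on that range `cos θ = t`, so `|R_{μ,ν}(x,y,z)| (xy)^{-μ} z^{μ+1}` is
`z / (xy)` times `(1 - t²)^{μ/2 - 1/4} |P^{1/2-μ}_{ν-1/2}(t)| / √(2π)`; the Jacobian cancels the
factor `z / (xy)`.
-/

open MeasureTheory Real Set Filter Topology

noncomputable def cosineLawSide (x y t : ℝ) : ℝ := √(x ^ 2 + y ^ 2 - 2 * x * y * t)

noncomputable def cosineLawCos (x y z : ℝ) : ℝ := (x ^ 2 + y ^ 2 - z ^ 2) / (2 * x * y)

section CosineLaw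

variable {x y : ℝ}

lemma sq_sub_le_cosineLaw (hxy : 0 ≤ x * y) {t : ℝ} (ht : t ≤ 1) :
    (x - y) ^ 2 ≤ x ^ 2 + y ^ 2 - 2 * x * y * t := by
  nlinarith

lemma sq_cosineLawSide (hxy : 0 ≤ x * y) {t : ℝ} (ht : t ≤ 1) :
    cosineLawSide x y t ^ 2 = x ^ 2 + y ^ 2 - 2 * x * y * t :=
  sq_sqrt ((sq_nonneg _).trans (sq_sub_le_cosineLaw hxy ht))

lemma cosineLawCos_cosineLawSide (hxy : 0 < x * y) {t : ℝ} (ht : t ≤ 1) :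
    cosineLawCos x y (cosineLawSide x y t) = t := by
  have hx := left_ne_zero_of_mul hxy.ne'
  have hy := right_ne_zero_of_mul hxy.ne'
  rw [cosineLawCos, sq_cosineLawSide hxy.le ht]
  field_simp
  ring

lemma cosineLawSide_cosineLawCos (hxy : 0 < x * y) {z : ℝ} (hz : 0 ≤ z) :
    cosineLawSide x y (cosineLawCos x y z) = z := by
  have hx := left_ne_zero_of_mul hxy.ne'
  have hy := right_ne_zero_of_mul hxy.ne'
  rw [cosineLawSide, cosineLawCos, show 2 * x * y * ((x ^ 2 + y ^ 2 - z ^ 2) / (2 * x * y)) =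
    x ^ 2 + y ^ 2 - z ^ 2 by field_simp, sub_sub_cancel, sqrt_sq hz]

variable (hx : 0 < x) (hy : 0 < y)
include hx hy

lemma cosineLawSide_mem_Ioo {t : ℝ} (ht : t ∈ Ioo (-1) 1) :
    cosineLawSide x y t ∈ Ioo |x - y| (x + y) := by
  have hxy := mul_pos hx hy
  refine ⟨?_, ?_⟩
  · rw [← sqrt_sq_eq_abs]
    exact sqrt_lt_sqrt (sq_nonneg _) (by nlinarith [ht.2])
  · rw [← sqrt_sq (add_pos hx hy).le]
    exact sqrt_lt_sqrt ((sq_nonneg _).trans (sq_sub_le_cosineLaw hxy.le ht.2.le))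
      (by nlinarith [ht.1])

lemma cosineLawCos_mem_Ioo {z : ℝ} (hz : z ∈ Ioo |x - y| (x + y)) :
    cosineLawCos x y z ∈ Ioo (-1) 1 := by
  have hxy := mul_pos hx hy
  have hz0 : 0 ≤ z := (abs_nonneg _).trans hz.1.le
  have hlow : (x - y) ^ 2 < z ^ 2 := by
    rw [← sq_abs]; exact pow_lt_pow_left₀ hz.1 (abs_nonneg _) two_ne_zero
  have hup : z ^ 2 < (x + y) ^ 2 := pow_lt_pow_left₀ hz.2 hz0 two_ne_zero
  rw [cosineLawCos, mem_Ioo, lt_div_iff₀ (by positivity), div_lt_iff₀ (by positivity)]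
  constructor <;> nlinarith

lemma bijOn_cosineLawSide : BijOn (cosineLawSide x y) (Ioo (-1) 1) (Ioo |x - y| (x + y)) :=
  InvOn.bijOn
    ⟨fun _ ht => cosineLawCos_cosineLawSide (mul_pos hx hy) ht.2.le,
      fun _ hz => cosineLawSide_cosineLawCos (mul_pos hx hy) ((abs_nonneg _).trans hz.1.le)⟩
    (fun _ => cosineLawSide_mem_Ioo hx hy) (fun _ => cosineLawCos_mem_Ioo hx hy)

lemma hasDerivAt_cosineLawSide {t : ℝ} (ht : t ∈ Ioo (-1) 1) :
    HasDerivAt (cosineLawSide x y) (-(x * y / cosineLawSide x y t)) t := by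
  have hpos : 0 < x ^ 2 + y ^ 2 - 2 * x * y * t := by
    rw [← sq_cosineLawSide (mul_pos hx hy).le ht.2.le]
    exact pow_pos ((abs_nonneg _).trans_lt (cosineLawSide_mem_Ioo hx hy ht).1) 2
  convert ((hasDerivAt_id t).const_mul (2 * x * y)).const_sub (x ^ 2 + y ^ 2) |>.sqrt hpos.ne'
    using 1
  · ext s; simp only [cosineLawSide, id]
  · simp only [cosineLawSide, id]
    field_simp

end CosineLaw

lemma abs_Rmn_of_mem_Ioo (μ ν : ℝ) {x y z : ℝ} (hx : 0 < x) (hy : 0 < y)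
    (hz : z ∈ Ioo |x - y| (x + y)) :
    |Rmn μ ν x y z| = (x * y) ^ (μ - 1) * (1 - cosineLawCos x y z ^ 2) ^ (μ / 2 - 1 / 4) *
      |legendreP (1 / 2 - μ) (ν - 1 / 2) (cosineLawCos x y z)| / (√(2 * π) * z ^ μ) := by
  have hc := cosineLawCos_mem_Ioo hx hy hz
  have hc2 : 0 ≤ 1 - cosineLawCos x y z ^ 2 := by nlinarith [hc.1, hc.2]
  have hz0 : 0 < z := (abs_nonneg _).trans_lt hz.1
  rw [Rmn, if_neg (not_lt.mpr hz.1.le), if_pos hz.2, ← cosineLawCos, sqrt_eq_rpow,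
    ← rpow_mul hc2, abs_div, abs_mul, abs_mul, abs_of_pos (rpow_pos_of_pos (mul_pos hx hy) _),
    abs_of_nonneg (rpow_nonneg hc2 _),
    abs_of_pos (mul_pos (sqrt_pos.2 (by positivity)) (rpow_pos_of_pos hz0 _))]
  ring_nf

theorem statement11_general (μ ν : ℝ)
    (x y : ℝ) (hx : 0 < x) (hy : 0 < y) :
    ∫⁻ z in Set.Ioo |x - y| (x + y),
        ENNReal.ofReal (|Rmn μ ν x y z| * (x * y) ^ (-μ) * z ^ (μ + 1)) =
      ENNReal.ofReal (1 / Real.sqrt (2 * Real.pi)) *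
        ∫⁻ t in Set.Ioo (-1 : ℝ) 1,
          ENNReal.ofReal ((1 - t ^ 2) ^ (μ / 2 - 1 / 4) *
            |legendreP (1 / 2 - μ) (ν - 1 / 2) t|) := by
  have hbij := bijOn_cosineLawSide hx hy
  rw [← hbij.image_eq, lintegral_image_eq_lintegral_abs_deriv_mul measurableSet_Ioo
    (fun t ht => (hasDerivAt_cosineLawSide hx hy ht).hasDerivWithinAt) hbij.injOn,
    ← lintegral_const_mul' _ _ ENNReal.ofReal_ne_top]
  refine setLIntegral_congr_fun measurableSet_Ioo fun t ht => ?_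
  have hxy := mul_pos hx hy
  have hz := cosineLawSide_mem_Ioo hx hy ht
  set z := cosineLawSide x y t
  have hz0 : 0 < z := (abs_nonneg _).trans_lt hz.1
  rw [abs_Rmn_of_mem_Ioo μ ν hx hy hz, cosineLawCos_cosineLawSide hxy ht.2.le,
    ← ENNReal.ofReal_mul (abs_nonneg _), ← ENNReal.ofReal_mul (by positivity)]
  congr 1
  rw [abs_neg, abs_of_pos (div_pos hxy hz0), rpow_sub hxy, rpow_neg hxy.le, rpow_add hz0,
    rpow_one, rpow_one]
  field_simp

/-- The trigonometric-range integral of |R_{μ,ν}| reduces to an integral of the Legendre P function. -/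
theorem statement11 (μ ν : ℝ) (hμ : -(1 / 2) < μ) (hν : -(1 / 2) < ν)
    (x y : ℝ) (hx : 0 < x) (hy : 0 < y) :
    ∫⁻ z in Set.Ioo |x - y| (x + y),
        ENNReal.ofReal (|Rmn μ ν x y z| * (x * y) ^ (-μ) * z ^ (μ + 1)) =
      ENNReal.ofReal (1 / Real.sqrt (2 * Real.pi)) *
        ∫⁻ t in Set.Ioo (-1 : ℝ) 1,
          ENNReal.ofReal ((1 - t ^ 2) ^ (μ / 2 - 1 / 4) *
            |legendreP (1 / 2 - μ) (ν - 1 / 2) t|) :=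
  statement11_general μ ν x y hx hy
end

section
/- Let μ > −1/2 and let ν satisfy −1/2 < ν ≤ 1/2. Then for every t with −1 < t < 1, the associated Legendre function P^{1/2−μ}_{ν−1/2}(t) is nonnegative. -/
open MeasureTheory Real Set Filter Topology

/-- Nonnegativity of P^{1/2-μ}_{ν-1/2} on (-1,1) for -1/2 < ν ≤ 1/2. -/
theorem statement12 (μ ν : ℝ) (hμ : -(1 / 2) < μ) (hν1 : -(1 / 2) < ν) (hν2 : ν ≤ 1 / 2)
    (t : ℝ) (ht1 : -1 < t) (ht2 : t < 1) :
    0 ≤ legendreP (1 / 2 - μ) (ν - 1 / 2) t := by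
  unfold legendreP hyp2F1
  apply mul_nonneg
  apply mul_nonneg
  · apply div_nonneg one_pos.le
    exact (Real.Gamma_pos_of_pos (by linarith)).le
  · apply Real.rpow_nonneg
    apply div_nonneg <;> linarith
  · apply tsum_nonneg
    intro n
    apply mul_nonneg
    · apply div_nonneg
      · apply mul_nonneg
        · exact Finset.prod_nonneg fun i _ => by
            have : (0:ℝ) ≤ i := Nat.cast_nonneg i
            linarith
        · exact Finset.prod_nonneg fun i _ => by
            have : (0:ℝ) ≤ i := Nat.cast_nonneg i
            linarith
      · apply mul_nonneg
        · exact Finset.prod_nonneg fun i _ => by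
            have : (0:ℝ) ≤ i := Nat.cast_nonneg i
            linarith
        · positivity
    · apply pow_nonneg; linarith
end

section
/- Let ν be any real number. Then there exists a constant C > 0 such that for all t with −1 < t < 1, |P^0_ν(t)| ≤ C (1 + |ln(1+t)|), where P^0_ν(t) = ₂F₁(ν+1, −ν; 1; (1−t)/2) is the Legendre function of order 0. -/
open MeasureTheory Real Set Filter Topology

/-! With s = (1 - t) / 2, P⁰_ν(t) = ∑ cₙ sⁿ where cₙ = (ν + 1)ₙ (-ν)ₙ / n!². Since
(ν + 1 + i)(-ν + i) = i (i + 1) - (ν² + ν), the ratio (n + 1) |cₙ| is a product of factors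
1 + O(1 / i²), hence bounded by e^{4 |ν² + ν|}. Comparing with ∑ sⁿ / n = -log (1 - s) and
1 - s = (1 + t) / 2 gives the logarithmic bound. -/

noncomputable def hyp2F1Coeff (a b c : ℝ) (n : ℕ) : ℝ :=
  (∏ i ∈ Finset.range n, (a + i)) * (∏ i ∈ Finset.range n, (b + i)) /
    ((∏ i ∈ Finset.range n, (c + i)) * n.factorial)

theorem hyp2F1_eq_tsum (a b c s : ℝ) :
    hyp2F1 a b c s = ∑' n, hyp2F1Coeff a b c n * s ^ n := rfl

theorem abs_hyp2F1_le_of_abs_coeff_le {a b c K s : ℝ} (hs : |s| < 1)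
    (hcoeff : ∀ n : ℕ, |hyp2F1Coeff a b c n| ≤ K / (n + 1)) :
    |hyp2F1 a b c s| ≤ K * (1 - log (1 - |s|)) := by
  set f : ℕ → ℝ := fun n => hyp2F1Coeff a b c n * s ^ n
  have hK : 0 ≤ K := by simpa using (abs_nonneg _).trans (hcoeff 0)
  have hlog : HasSum (fun n : ℕ => K * (|s| ^ (n + 1) / (n + 1))) (K * -log (1 - |s|)) :=
    (hasSum_pow_div_log_of_abs_lt_one (by rwa [abs_abs])).mul_left K
  have htail : ∀ n : ℕ, ‖f (n + 1)‖ ≤ K * (|s| ^ (n + 1) / (n + 1)) := by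
    intro n
    calc ‖f (n + 1)‖ = |hyp2F1Coeff a b c (n + 1)| * |s| ^ (n + 1) := by
          simp [f]
      _ ≤ K / (n + 1 + 1) * |s| ^ (n + 1) := by
          gcongr; exact_mod_cast hcoeff (n + 1)
      _ ≤ K / (n + 1) * |s| ^ (n + 1) := by gcongr; linarith
      _ = K * (|s| ^ (n + 1) / (n + 1)) := by ring
  have hf : Summable f :=
    (summable_nat_add_iff 1).mp (Summable.of_norm_bounded hlog.summable htail)
  calc |hyp2F1 a b c s| = |f 0 + ∑' n, f (n + 1)| := by
        rw [hyp2F1_eq_tsum, hf.tsum_eq_zero_add]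
    _ ≤ |f 0| + ‖∑' n, f (n + 1)‖ := abs_add_le _ _
    _ ≤ K + K * -log (1 - |s|) := by
        gcongr
        · simpa [f] using hcoeff 0
        · exact tsum_of_norm_bounded hlog htail
    _ = K * (1 - log (1 - |s|)) := by ring

theorem succ_mul_prod_le_exp_mul_factorial_sq {M : ℝ} (hM : 0 ≤ M) (n : ℕ) :
    ((n : ℝ) + 1) * ∏ i ∈ Finset.range n, ((i : ℝ) * (i + 1) + M) ≤
      exp (4 * M * n / (n + 1)) * (n.factorial : ℝ) ^ 2 := by
  induction n with
  | zero => simp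
  | succ n ih =>
    set x : ℝ := (n : ℝ)
    have hx : 0 ≤ x := Nat.cast_nonneg n
    set δ := 4 * M / ((x + 1) * (x + 2)) with hδ
    have hexp : 4 * M * (x + 1) / (x + 1 + 1) = 4 * M * x / (x + 1) + δ := by
      rw [hδ]; field_simp; ring
    have hfactor : (x + 2) * (x * (x + 1) + M) ≤ exp δ * (x + 1) ^ 3 := by
      have hpoly : (x + 2) * (x * (x + 1) + M) ≤ (1 + δ) * (x + 1) ^ 3 := by
        rw [← mul_le_mul_iff_of_pos_right (by positivity : (0 : ℝ) < x + 2)]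
        have : (1 + δ) * (x + 1) ^ 3 * (x + 2) = (x + 1) ^ 3 * (x + 2) + 4 * M * (x + 1) ^ 2 := by
          rw [hδ]; field_simp
        rw [this]
        -- the difference of the two sides is (x + 1) (x + 2) + M x (3 x + 4)
        nlinarith [mul_nonneg hM hx, mul_nonneg (mul_nonneg hM hx) hx]
      exact hpoly.trans (by gcongr; linarith [add_one_le_exp δ])
    rw [Finset.prod_range_succ, Nat.factorial_succ]
    push_cast
    rw [hexp, exp_add]
    rw [← mul_le_mul_iff_of_pos_left (by positivity : (0 : ℝ) < x + 1)]
    calc (x + 1) * ((x + 1 + 1) * ((∏ i ∈ Finset.range n, ((i : ℝ) * (i + 1) + M)) * (x * (x + 1) + M)))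
        = ((x + 2) * (x * (x + 1) + M)) * ((x + 1) * ∏ i ∈ Finset.range n, ((i : ℝ) * (i + 1) + M)) := by
          ring
      _ ≤ (exp δ * (x + 1) ^ 3) * (exp (4 * M * x / (x + 1)) * (n.factorial : ℝ) ^ 2) := by
          gcongr
      _ = (x + 1) * (exp (4 * M * x / (x + 1)) * exp δ * ((x + 1) * n.factorial) ^ 2) := by ring

theorem abs_hyp2F1Coeff_legendre_le (ν : ℝ) (n : ℕ) :
    |hyp2F1Coeff (ν + 1) (-ν) 1 n| ≤ exp (4 * |ν ^ 2 + ν|) / (n + 1) := by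
  set M := |ν ^ 2 + ν|
  have hM : 0 ≤ M := abs_nonneg _
  have hnum : |(∏ i ∈ Finset.range n, (ν + 1 + i)) * ∏ i ∈ Finset.range n, (-ν + i)| ≤
      ∏ i ∈ Finset.range n, ((i : ℝ) * (i + 1) + M) := by
    rw [← Finset.prod_mul_distrib, Finset.abs_prod]
    refine Finset.prod_le_prod (fun _ _ => abs_nonneg _) fun i _ => ?_
    rw [show (ν + 1 + i) * (-ν + i) = (i : ℝ) * (i + 1) - (ν ^ 2 + ν) by ring]
    exact (abs_sub _ _).trans (by rw [abs_of_nonneg (by positivity)])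
  have hden : ∏ i ∈ Finset.range n, ((1 : ℝ) + i) = n.factorial := by
    simp_rw [add_comm (1 : ℝ)]
    exact_mod_cast Finset.prod_range_add_one_eq_factorial n
  have hexp : exp (4 * M * n / (n + 1)) ≤ exp (4 * M) :=
    exp_le_exp.mpr (by
      rw [div_le_iff₀ (by positivity)]; nlinarith)
  rw [hyp2F1Coeff, hden, abs_div, abs_of_pos (by positivity : (0 : ℝ) < n.factorial * n.factorial),
    div_le_div_iff₀ (by positivity) (by positivity)]
  calc |(∏ i ∈ Finset.range n, (ν + 1 + i)) * ∏ i ∈ Finset.range n, (-ν + i)| * (n + 1)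
      ≤ (n + 1) * ∏ i ∈ Finset.range n, ((i : ℝ) * (i + 1) + M) := by
        rw [mul_comm]; gcongr
    _ ≤ exp (4 * M * n / (n + 1)) * (n.factorial : ℝ) ^ 2 :=
        succ_mul_prod_le_exp_mul_factorial_sq hM n
    _ ≤ exp (4 * M) * (n.factorial * n.factorial) := by rw [← sq]; gcongr

theorem legendreP_zero_eq_hyp2F1 (ν t : ℝ) :
    legendreP 0 ν t = hyp2F1 (ν + 1) (-ν) 1 ((1 - t) / 2) := by
  simp [legendreP, Real.Gamma_one]

/-- Estimate (2.13): logarithmic bound for the Legendre function of order 0. -/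
theorem statement16 (ν : ℝ) :
    ∃ C : ℝ, 0 < C ∧ ∀ t : ℝ, -1 < t → t < 1 →
      |legendreP 0 ν t| ≤ C * (1 + |Real.log (1 + t)|) := by
  set K := exp (4 * |ν ^ 2 + ν|)
  have hlog2 : 0 < log 2 := log_pos one_lt_two
  refine ⟨K * (1 + log 2), by positivity, fun t ht₁ ht₂ => ?_⟩
  have hs : |(1 - t) / 2| = (1 - t) / 2 := abs_of_pos (by linarith)
  have hlog : log (1 - (1 - t) / 2) = log (1 + t) - log 2 := by
    rw [← log_div (by linarith) two_ne_zero]; ring_nf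
  have hbound := abs_hyp2F1_le_of_abs_coeff_le (by rw [hs]; linarith)
    (abs_hyp2F1Coeff_legendre_le ν)
  rw [hs, hlog] at hbound
  rw [legendreP_zero_eq_hyp2F1]
  refine hbound.trans ?_
  have hK : 0 ≤ K := (exp_pos _).le
  have hL : 0 ≤ |log (1 + t)| + log (1 + t) := by linarith [neg_abs_le (log (1 + t))]
  nlinarith [mul_nonneg hK hL, mul_nonneg (mul_nonneg hK hlog2.le) (abs_nonneg (log (1 + t)))]
end

section
/- Let μ > 0 and ν > −3/2 with μ + ν + 1 > 0. Then there exists a constant C > 0 such that for all t > 1, |Q^μ_ν(t)| ≤ C (t²−1)^{−μ/2} t^{−(ν−μ+1)}. -/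
/-!
With `a = (μ + ν)/2 + 1`, `b = (μ + ν + 1)/2`, `c = ν + 3/2` we have `a + b - c = μ > 0`, and the
coefficients of `₂F₁(a, b; c; s)` are at most a constant times those of
`(1 - s)^{-μ} = ∑ (μ)ₙ sⁿ / n!`: by Euler's limit formula `(a)ₙ (b)ₙ / ((c)ₙ (μ)ₙ)` converges
to `Γ(c) Γ(μ) / (Γ(a) Γ(b))`, the powers `n^{a+b}` and `n^{c+μ}` cancelling. Hence
`₂F₁(a, b; c; 1/t²) ≲ (1 - 1/t²)^{-μ} = (t² - 1)^{-μ} t^{2μ}`, which turns the prefactor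
`(t² - 1)^{μ/2} t^{-(μ+ν+1)}` of `Q^μ_ν` into the claimed bound.
-/

open MeasureTheory Real Set Filter Topology

theorem ascPochhammer_eval_eq_prod_range {R : Type*} [CommSemiring R] (a : R) (n : ℕ) :
    (ascPochhammer R n).eval a = ∏ i ∈ Finset.range n, (a + i) := by
  induction n with
  | zero => simp
  | succ n ih => rw [ascPochhammer_succ_eval, ih, Finset.prod_range_succ]

theorem Ring.choose_add_natCast_sub_one {K : Type*} [Field K] [CharZero K] (a : K) (n : ℕ) :
    Ring.choose (a + n - 1) n = (∏ i ∈ Finset.range n, (a + i)) / n.factorial := by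
  rw [Ring.choose_eq_smul, Polynomial.descPochhammer_smeval_eq_ascPochhammer,
    Polynomial.ascPochhammer_smeval_eq_eval, show a + n - 1 - n + 1 = a by ring,
    ascPochhammer_eval_eq_prod_range, smul_eq_mul, inv_mul_eq_div]

theorem hasSum_prod_range_add_div_factorial_mul_pow (a : ℝ) {s : ℝ} (hs : |s| < 1) :
    HasSum (fun n : ℕ => (∏ i ∈ Finset.range n, (a + i)) / n.factorial * s ^ n)
      ((1 - s) ^ (-a)) := by
  have hsum := (Real.one_div_one_sub_rpow_hasFPowerSeriesOnBall_zero a).hasSum (y := s)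
    (by simpa [enorm_eq_nnnorm, ← NNReal.coe_lt_coe] using hs)
  rw [Real.rpow_neg (by linarith [le_abs_self s])]
  simpa [FormalMultilinearSeries.ofScalars_apply_eq, Ring.choose_add_natCast_sub_one, mul_comm]
    using hsum

theorem prod_range_add_pos {a : ℝ} (ha : 0 < a) (n : ℕ) : 0 < ∏ i ∈ Finset.range n, (a + i) :=
  Finset.prod_pos fun _ _ => by positivity

theorem prod_range_add_mul_div_eq_GammaSeq {a b c d : ℝ} (h : a + b = c + d) {n : ℕ}
    (hn : n ≠ 0) :
    (∏ i ∈ Finset.range (n + 1), (a + i)) * (∏ i ∈ Finset.range (n + 1), (b + i)) /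
        ((∏ i ∈ Finset.range (n + 1), (c + i)) * (∏ i ∈ Finset.range (n + 1), (d + i))) =
      Real.GammaSeq c n * Real.GammaSeq d n / (Real.GammaSeq a n * Real.GammaSeq b n) := by
  have hn' : (0 : ℝ) < n := by positivity
  have hpow : (n : ℝ) ^ a * (n : ℝ) ^ b = (n : ℝ) ^ c * (n : ℝ) ^ d := by
    rw [← Real.rpow_add hn', ← Real.rpow_add hn', h]
  simp only [Real.GammaSeq]
  rw [div_mul_div_comm, div_mul_div_comm, div_div_div_eq, mul_mul_mul_comm ((n : ℝ) ^ c),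
    mul_mul_mul_comm ((n : ℝ) ^ a), ← hpow]
  field_simp

theorem exists_prod_range_add_mul_le {a b c d : ℝ} (ha : 0 < a) (hb : 0 < b) (hc : 0 < c)
    (hd : 0 < d) (h : a + b = c + d) :
    ∃ K, ∀ n : ℕ, (∏ i ∈ Finset.range n, (a + i)) * (∏ i ∈ Finset.range n, (b + i)) ≤
      K * ((∏ i ∈ Finset.range n, (c + i)) * (∏ i ∈ Finset.range n, (d + i))) := by
  have hlim : Tendsto (fun n => Real.GammaSeq c n * Real.GammaSeq d n /
      (Real.GammaSeq a n * Real.GammaSeq b n)) atTop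
      (𝓝 (Real.Gamma c * Real.Gamma d / (Real.Gamma a * Real.Gamma b))) :=
    ((Real.GammaSeq_tendsto_Gamma c).mul (Real.GammaSeq_tendsto_Gamma d)).div
      ((Real.GammaSeq_tendsto_Gamma a).mul (Real.GammaSeq_tendsto_Gamma b))
      (mul_pos (Real.Gamma_pos_of_pos ha) (Real.Gamma_pos_of_pos hb)).ne'
  have hratio : Tendsto (fun n =>
      (∏ i ∈ Finset.range n, (a + i)) * (∏ i ∈ Finset.range n, (b + i)) /
        ((∏ i ∈ Finset.range n, (c + i)) * (∏ i ∈ Finset.range n, (d + i)))) atTop _ :=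
    (tendsto_add_atTop_iff_nat 1).mp <| hlim.congr' <| eventually_atTop.mpr
      ⟨1, fun n hn => (prod_range_add_mul_div_eq_GammaSeq h (by omega)).symm⟩
  obtain ⟨K, hK⟩ := hratio.bddAbove_range
  refine ⟨K, fun n => ?_⟩
  rw [← div_le_iff₀ (mul_pos (prod_range_add_pos hc n) (prod_range_add_pos hd n))]
  exact hK ⟨n, rfl⟩

theorem hyp2F1_nonneg {a b c : ℝ} (ha : 0 < a) (hb : 0 < b) (hc : 0 < c) {s : ℝ}
    (hs : 0 ≤ s) : 0 ≤ hyp2F1 a b c s :=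
  tsum_nonneg fun n => by
    have := prod_range_add_pos ha n
    have := prod_range_add_pos hb n
    have := prod_range_add_pos hc n
    positivity

theorem exists_hyp2F1_le_mul_one_sub_rpow {a b c : ℝ} (ha : 0 < a) (hb : 0 < b) (hc : 0 < c)
    (habc : 0 < a + b - c) :
    ∃ K, 0 < K ∧ ∀ s : ℝ, 0 ≤ s → s < 1 → hyp2F1 a b c s ≤ K * (1 - s) ^ (-(a + b - c)) := by
  obtain ⟨K, hK⟩ := exists_prod_range_add_mul_le ha hb hc habc (by ring)
  have hK0 : 0 < K := by linarith [show 1 ≤ K by simpa using hK 0]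
  refine ⟨K, hK0, fun s hs0 hs1 => ?_⟩
  have hbin := (hasSum_prod_range_add_div_factorial_mul_pow (a + b - c)
    (abs_lt.2 ⟨by linarith, hs1⟩)).mul_left K
  have hle : ∀ n : ℕ, (∏ i ∈ Finset.range n, (a + i)) * (∏ i ∈ Finset.range n, (b + i)) /
      ((∏ i ∈ Finset.range n, (c + i)) * n.factorial) * s ^ n ≤
      K * ((∏ i ∈ Finset.range n, (a + b - c + i)) / n.factorial * s ^ n) := fun n => by
    have := prod_range_add_pos hc n
    rw [← mul_assoc, ← mul_div_assoc]
    refine mul_le_mul_of_nonneg_right ?_ (by positivity)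
    rw [div_le_div_iff₀ (by positivity) (by positivity)]
    calc _ ≤ K * ((∏ i ∈ Finset.range n, (c + i)) * ∏ i ∈ Finset.range n, (a + b - c + i)) *
          n.factorial := mul_le_mul_of_nonneg_right (hK n) (by positivity)
      _ = _ := by ring
  have hnonneg : ∀ n : ℕ,
      0 ≤ (∏ i ∈ Finset.range n, (a + i)) * (∏ i ∈ Finset.range n, (b + i)) /
        ((∏ i ∈ Finset.range n, (c + i)) * n.factorial) * s ^ n := fun n => by
    have := prod_range_add_pos ha n
    have := prod_range_add_pos hb n
    have := prod_range_add_pos hc n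
    positivity
  exact hasSum_le hle (hbin.summable.of_nonneg_of_le hnonneg hle).hasSum hbin

theorem one_sub_one_div_sq_rpow_neg {t : ℝ} (ht : 1 < t) (μ : ℝ) :
    (1 - 1 / t ^ 2) ^ (-μ) = (t ^ 2 - 1) ^ (-μ) * t ^ (2 * μ) := by
  have ht0 : 0 < t := by linarith
  rw [show 1 - 1 / t ^ 2 = (t ^ 2 - 1) / t ^ 2 by field_simp,
    Real.div_rpow (by nlinarith) (by positivity),
    Real.rpow_neg (by positivity : (0 : ℝ) ≤ t ^ 2),
    div_inv_eq_mul, ← Real.rpow_natCast, ← Real.rpow_mul ht0.le]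
  norm_num

/-- Estimate (2.14): bound for Q^μ_ν with μ > 0. -/
theorem statement17 (μ ν : ℝ) (hμ : 0 < μ) (hν : -(3 / 2) < ν) (h : 0 < μ + ν + 1) :
    ∃ C : ℝ, 0 < C ∧ ∀ t : ℝ, 1 < t →
      ‖legendreQ μ ν t‖ ≤ C * (t ^ 2 - 1) ^ (-(μ / 2)) * t ^ (-(ν - μ + 1)) := by
  have ha : 0 < (μ + ν) / 2 + 1 := by linarith
  have hb : 0 < (μ + ν + 1) / 2 := by linarith
  have hc : 0 < ν + 3 / 2 := by linarith
  obtain ⟨K, hK0, hK⟩ := exists_hyp2F1_le_mul_one_sub_rpow ha hb hc (by linarith)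
  have hΓ₁ := Real.Gamma_pos_of_pos h
  have hΓ₂ := Real.Gamma_pos_of_pos hc
  refine ⟨√π * Real.Gamma (μ + ν + 1) * K / (2 ^ (ν + 1) * Real.Gamma (ν + 3 / 2)),
    by positivity, fun t ht => ?_⟩
  have ht0 : 0 < t := by linarith
  have ht2 : 0 < t ^ 2 - 1 := by nlinarith
  have hs : 0 ≤ 1 / t ^ 2 := by positivity
  have hF := hK (1 / t ^ 2) hs ((div_lt_one (by positivity)).2 (by nlinarith))
  rw [show (μ + ν) / 2 + 1 + (μ + ν + 1) / 2 - (ν + 3 / 2) = μ by ring,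
    one_sub_one_div_sq_rpow_neg ht] at hF
  have hF0 := hyp2F1_nonneg ha hb hc hs
  rw [norm_legendreQ, legendreQreal, abs_of_nonneg (by positivity)]
  calc _ ≤ √π * Real.Gamma (μ + ν + 1) * (t ^ 2 - 1) ^ (μ / 2) /
        (2 ^ (ν + 1) * t ^ (μ + ν + 1) * Real.Gamma (ν + 3 / 2)) *
        (K * ((t ^ 2 - 1) ^ (-μ) * t ^ (2 * μ))) := by gcongr
    _ = √π * Real.Gamma (μ + ν + 1) * K / (2 ^ (ν + 1) * Real.Gamma (ν + 3 / 2)) *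
        ((t ^ 2 - 1) ^ (μ / 2) * (t ^ 2 - 1) ^ (-μ)) * (t ^ (2 * μ) / t ^ (μ + ν + 1)) := by
      field_simp
    _ = _ := by
      rw [← Real.rpow_add ht2, ← Real.rpow_sub ht0]
      ring_nf
end

section
/- Let μ > −1/2 and let x ≥ y > 0. Then ∫_{x−y}^{x+y} [((x+y)²−z²)(z²−(x−y)²)]^{μ−1/2} z dz = 2^{2μ−1} √π (Γ(μ+1/2)/Γ(μ+1)) (xy)^{2μ}. -/
open MeasureTheory Real Set Filter Topology

/-!
The substitution `u = z²` turns the integral into half of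
`∫_{a²}^{b²} ((b² - u)(u - a²))^(s-1) du` with `a = x - y`, `b = x + y`, `s = μ + 1/2`, which is
`(b² - a²)^(2s-1)` times the Euler beta integral `B(s, s)`. Since `b² - a² = 4xy`, Legendre's
duplication formula `Γ(s) Γ(s + 1/2) = 2^(1-2s) √π Γ(2s)` puts `B(s, s)` into the stated form.
-/

theorem integral_Ioo_rpow_mul_one_sub_rpow {α β : ℝ} (hα : 0 < α) (hβ : 0 < β) :
    ∫ t in Ioo (0 : ℝ) 1, t ^ (α - 1) * (1 - t) ^ (β - 1) = ProbabilityTheory.beta α β := by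
  rw [ProbabilityTheory.beta_eq_betaIntegralReal α β hα hβ, Complex.betaIntegral,
    intervalIntegral.integral_of_le zero_le_one, ← integral_Ioc_eq_integral_Ioo,
    ← RCLike.re_to_complex, ← integral_re]
  · refine setIntegral_congr_fun measurableSet_Ioc fun t ⟨ht0, ht1⟩ ↦ ?_
    norm_cast
    rw [← Complex.ofReal_cpow ht0.le, ← Complex.ofReal_cpow (by linarith), RCLike.re_to_complex,
      Complex.re_mul_ofReal, Complex.ofReal_re]
  · exact (Complex.betaIntegral_convergent (by simpa) (by simpa)).1

theorem integral_Ioo_sub_rpow_mul_sub_rpow {a b α β : ℝ} (hab : a < b) (hα : 0 < α)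
    (hβ : 0 < β) :
    ∫ u in Ioo a b, (u - a) ^ (α - 1) * (b - u) ^ (β - 1) =
      (b - a) ^ (α + β - 1) * ProbabilityTheory.beta α β := by
  have hc : 0 < b - a := sub_pos.mpr hab
  have hscale : ∀ t ∈ uIcc (0 : ℝ) 1,
      ((b - a) * t + a - a) ^ (α - 1) * (b - ((b - a) * t + a)) ^ (β - 1) =
        (b - a) ^ (α + β - 2) * (t ^ (α - 1) * (1 - t) ^ (β - 1)) := by
    intro t ht
    rw [uIcc_of_le zero_le_one] at ht
    rw [show (b - a) * t + a - a = (b - a) * t by ring,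
      show b - ((b - a) * t + a) = (b - a) * (1 - t) by ring,
      mul_rpow hc.le ht.1, mul_rpow hc.le (by linarith [ht.2]),
      show α + β - 2 = (α - 1) + (β - 1) by ring, rpow_add hc]
    ring
  have hsub := intervalIntegral.integral_comp_mul_add
    (fun u ↦ (u - a) ^ (α - 1) * (b - u) ^ (β - 1)) hc.ne' (a := 0) (b := 1) a
  simp only [mul_zero, zero_add, mul_one, sub_add_cancel] at hsub
  rw [intervalIntegral.integral_congr hscale, intervalIntegral.integral_const_mul,
    intervalIntegral.integral_of_le zero_le_one, integral_Ioc_eq_integral_Ioo,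
    integral_Ioo_rpow_mul_one_sub_rpow hα hβ, smul_eq_mul,
    intervalIntegral.integral_of_le hab.le, integral_Ioc_eq_integral_Ioo,
    eq_inv_mul_iff_mul_eq₀ hc.ne'] at hsub
  rw [← hsub, show α + β - 1 = 1 + (α + β - 2) by ring, rpow_add hc, rpow_one]
  ring

theorem integral_Ioo_comp_sq_mul_self {a b : ℝ} (ha : 0 ≤ a) (hab : a ≤ b) (g : ℝ → ℝ) :
    ∫ z in Ioo a b, g (z ^ 2) * z = (∫ u in Ioo (a ^ 2) (b ^ 2), g u) / 2 := by
  have hmono : StrictMonoOn (fun z : ℝ ↦ z ^ 2) (Icc a b) :=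
    (pow_left_strictMonoOn₀ two_ne_zero).mono fun z hz ↦ le_trans ha hz.1
  rw [← (continuous_pow 2).continuousOn.image_Ioo_of_strictMonoOn hab hmono,
    integral_image_eq_integral_abs_deriv_smul measurableSet_Ioo
      (fun z _ ↦ (hasDerivAt_pow 2 z).hasDerivWithinAt) (hmono.injOn.mono Ioo_subset_Icc_self),
    eq_div_iff two_ne_zero, ← integral_mul_const]
  refine setIntegral_congr_fun measurableSet_Ioo fun z hz ↦ ?_
  have hz0 : 0 < z := ha.trans_lt hz.1
  rw [abs_of_pos (by positivity), smul_eq_mul]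
  ring

theorem integral_Ioo_sq_sub_mul_sub_sq_rpow_mul_self {a b s : ℝ} (ha : 0 ≤ a) (hab : a < b)
    (hs : 0 < s) :
    ∫ z in Ioo a b, ((b ^ 2 - z ^ 2) * (z ^ 2 - a ^ 2)) ^ (s - 1) * z =
      (b ^ 2 - a ^ 2) ^ (2 * s - 1) * ProbabilityTheory.beta s s / 2 := by
  have hsq : a ^ 2 < b ^ 2 := pow_lt_pow_left₀ hab ha two_ne_zero
  have hsplit : ∀ u ∈ Ioo (a ^ 2) (b ^ 2),
      ((b ^ 2 - u) * (u - a ^ 2)) ^ (s - 1) = (u - a ^ 2) ^ (s - 1) * (b ^ 2 - u) ^ (s - 1) :=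
    fun u hu ↦ by rw [mul_comm, mul_rpow (by linarith [hu.1]) (by linarith [hu.2])]
  rw [integral_Ioo_comp_sq_mul_self (g := fun u ↦ ((b ^ 2 - u) * (u - a ^ 2)) ^ (s - 1)) ha hab.le,
    setIntegral_congr_fun measurableSet_Ioo hsplit, integral_Ioo_sub_rpow_mul_sub_rpow hsq hs hs,
    ← two_mul]

theorem beta_self_eq_Gamma_div_Gamma_add_half {s : ℝ} (hs : 0 < s) :
    ProbabilityTheory.beta s s = 2 ^ (1 - 2 * s) * √π * (Gamma s / Gamma (s + 1 / 2)) := by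
  have hG : 0 < Gamma (s + 1 / 2) := Gamma_pos_of_pos (by linarith)
  have hG2 : 0 < Gamma (2 * s) := Gamma_pos_of_pos (by linarith)
  rw [ProbabilityTheory.beta, ← two_mul, mul_div_assoc', div_eq_div_iff hG2.ne' hG.ne']
  linear_combination Gamma s * Gamma_mul_Gamma_add_half s

/-- The beta-type integral ∫ [((x+y)²-z²)(z²-(x-y)²)]^{μ-1/2} z dz. -/
theorem statement19 (μ : ℝ) (hμ : -(1 / 2) < μ) (x y : ℝ) (hy : 0 < y) (hxy : y ≤ x) :
    ∫ z in Set.Ioo (x - y) (x + y),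
        (((x + y) ^ 2 - z ^ 2) * (z ^ 2 - (x - y) ^ 2)) ^ (μ - 1 / 2) * z =
      (2 : ℝ) ^ (2 * μ - 1) * Real.sqrt Real.pi *
        (Real.Gamma (μ + 1 / 2) / Real.Gamma (μ + 1)) * (x * y) ^ (2 * μ) := by
  have hs : 0 < μ + 1 / 2 := by linarith
  have hxy0 : 0 < x * y := mul_pos (hy.trans_le hxy) hy
  have key := integral_Ioo_sq_sub_mul_sub_sq_rpow_mul_self (sub_nonneg.mpr hxy)
    (by linarith : x - y < x + y) hs
  rw [show μ + 1 / 2 - 1 = μ - 1 / 2 by ring] at key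
  rw [key, beta_self_eq_Gamma_div_Gamma_add_half hs,
    show (x + y) ^ 2 - (x - y) ^ 2 = (2 * 2) * (x * y) by ring,
    show 2 * (μ + 1 / 2) - 1 = 2 * μ by ring, show 1 - 2 * (μ + 1 / 2) = -(2 * μ) by ring,
    show μ + 1 / 2 + 1 / 2 = μ + 1 by ring, mul_rpow (by norm_num) hxy0.le,
    mul_rpow zero_le_two zero_le_two, rpow_neg zero_le_two, rpow_sub_one two_ne_zero]
  field_simp
end
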